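/- For an elliptic curve E over F_q, the rank-2 beta invariant satisfies β_{E,2}(O_E) = (q+3)/(q²−1), computed as the sum [1/((q²−1)(q²−q)) + 1/((q−1)q)] + 3·[1/((q²−1)(q²−q)) + 1/((q−1)q)] + (q−3)·1/(q−1)², assuming #E[2](F_q) = 4 (all 2-torsion rational). -/
import Mathlib

/-!
STATEMENT 11: For an elliptic curve E/F_q with all 2-torsion rational
(#E[2](F_q) = 4), the rank-2 beta invariant satisfies
β_{E,2}(O_E) = (q+3)/(q²−1), computed as
[1/((q²−1)(q²−q)) + 1/((q−1)q)] + 3·[1/((q²−1)(q²−q)) + 1/((q−1)q)] + (q−3)/(q−1)².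
This is the stated algebraic identity for q > 1.
-/

theorem beta_E2_identity (q : ℝ) (hq : 1 < q) :
    (1 / ((q ^ 2 - 1) * (q ^ 2 - q)) + 1 / ((q - 1) * q)) +
        3 * (1 / ((q ^ 2 - 1) * (q ^ 2 - q)) + 1 / ((q - 1) * q)) +
        (q - 3) * (1 / (q - 1) ^ 2) =
      (q + 3) / (q ^ 2 - 1) := by
  have h0 : q ≠ 0 := by nlinarith
  have h1 : q - 1 ≠ 0 := by nlinarith
  have h2 : q + 1 ≠ 0 := by nlinarith
  have h3 : q ^ 2 - 1 ≠ 0 := by nlinarith [sq_nonneg (q-1)]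
  have h4 : q ^ 2 - q ≠ 0 := by nlinarith
  field_simp
  ring
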